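/- Let a,b,c,d,e,f,h,i,j,p ∈ ℂ and consider a domain-4 symmetric signature of arity n determined by values g_{w,x,y,z} (w+x+y+z = n) satisfying the six Fibonacci recurrences with these parameters. Then g is uniquely determined by its four 'top' values g_{n,0,0,0}, g_{n-1,1,0,0}, g_{n-1,0,1,0}, g_{n-1,0,0,1}: any two such signatures agreeing on these four values are equal. -/

import Mathlib

/-!
Every value `g w x y z` with `x + y + z ≥ 2` is the left-hand side of one of the six recurrences,
whose right-hand side only involves values with smaller `x + y + z`. Strong induction on
`x + y + z` therefore reduces everything to the four values with `x + y + z ≤ 1`.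
-/

variable {R : Type*} [Add R] [Mul R]

/-- The recurrences with `w` shifted by two: the case `w + 2` here is the case `w` of the paper. -/
def IsFibonacciGate (a b c d e f h i j p : R) (n : ℕ) (g : ℕ → ℕ → ℕ → ℕ → R) : Prop :=
  ∀ w x y z : ℕ, w + x + y + z + 2 = n →
    (g w (x+2) y z = g (w+2) x y z + a * g (w+1) (x+1) y z + b * g (w+1) x (y+1) z + c * g (w+1) x y (z+1)) ∧
    (g w x (y+2) z = g (w+2) x y z + d * g (w+1) (x+1) y z + e * g (w+1) x (y+1) z + f * g (w+1) x y (z+1)) ∧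
    (g w x y (z+2) = g (w+2) x y z + h * g (w+1) (x+1) y z + i * g (w+1) x (y+1) z + j * g (w+1) x y (z+1)) ∧
    (g w (x+1) (y+1) z = b * g (w+1) (x+1) y z + d * g (w+1) x (y+1) z + p * g (w+1) x y (z+1)) ∧
    (g w (x+1) y (z+1) = c * g (w+1) (x+1) y z + p * g (w+1) x (y+1) z + h * g (w+1) x y (z+1)) ∧
    (g w x (y+1) (z+1) = p * g (w+1) (x+1) y z + f * g (w+1) x (y+1) z + i * g (w+1) x y (z+1))

namespace IsFibonacciGate

variable {a b c d e f h i j p : R} {n : ℕ} {g₁ g₂ : ℕ → ℕ → ℕ → ℕ → R}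

theorem eq_of_eq_below (hg₁ : IsFibonacciGate a b c d e f h i j p n g₁)
    (hg₂ : IsFibonacciGate a b c d e f h i j p n g₂) {s : ℕ}
    (hbelow : ∀ w x y z, x + y + z < s → w + x + y + z = n → g₁ w x y z = g₂ w x y z)
    {w x y z : ℕ} (hs : x + y + z = s) (h2s : 2 ≤ s) (hn : w + x + y + z = n) :
    g₁ w x y z = g₂ w x y z := by
  match x, y, z with
  | x+2, y, z =>
    rw [(hg₁ w x y z (by omega)).1, (hg₂ w x y z (by omega)).1]
    simp (disch := omega) only [hbelow]
  | 0, y+2, z =>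
    rw [(hg₁ w 0 y z (by omega)).2.1, (hg₂ w 0 y z (by omega)).2.1]
    simp (disch := omega) only [hbelow]
  | 0, 0, z+2 =>
    rw [(hg₁ w 0 0 z (by omega)).2.2.1, (hg₂ w 0 0 z (by omega)).2.2.1]
    simp (disch := omega) only [hbelow]
  | x+1, y+1, z =>
    rw [(hg₁ w x y z (by omega)).2.2.2.1, (hg₂ w x y z (by omega)).2.2.2.1]
    simp (disch := omega) only [hbelow]
  | x+1, 0, z+1 =>
    rw [(hg₁ w x 0 z (by omega)).2.2.2.2.1, (hg₂ w x 0 z (by omega)).2.2.2.2.1]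
    simp (disch := omega) only [hbelow]
  | 0, y+1, z+1 =>
    rw [(hg₁ w 0 y z (by omega)).2.2.2.2.2, (hg₂ w 0 y z (by omega)).2.2.2.2.2]
    simp (disch := omega) only [hbelow]
  | 0, 0, 0 | 1, 0, 0 | 0, 1, 0 | 0, 0, 1 => omega

theorem eq_of_eq_top (hg₁ : IsFibonacciGate a b c d e f h i j p n g₁)
    (hg₂ : IsFibonacciGate a b c d e f h i j p n g₂)
    (h₀ : g₁ n 0 0 0 = g₂ n 0 0 0) (h₁ : g₁ (n-1) 1 0 0 = g₂ (n-1) 1 0 0)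
    (h₂ : g₁ (n-1) 0 1 0 = g₂ (n-1) 0 1 0) (h₃ : g₁ (n-1) 0 0 1 = g₂ (n-1) 0 0 1) :
    ∀ w x y z, w + x + y + z = n → g₁ w x y z = g₂ w x y z := by
  suffices ∀ s w x y z, x + y + z = s → w + x + y + z = n → g₁ w x y z = g₂ w x y z from
    fun w x y z => this _ w x y z rfl
  intro s
  induction s using Nat.strong_induction_on with
  | _ s ih =>
    intro w x y z hs hn
    match x, y, z with
    | 0, 0, 0 =>
      obtain rfl : w = n := by omega
      exact h₀
    | 1, 0, 0 =>
      obtain rfl : w = n - 1 := by omega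
      exact h₁
    | 0, 1, 0 =>
      obtain rfl : w = n - 1 := by omega
      exact h₂
    | 0, 0, 1 =>
      obtain rfl : w = n - 1 := by omega
      exact h₃
    | _+2, _, _ | _, _+2, _ | _, _, _+2 | _+1, _+1, _ | _+1, _, _+1 | _, _+1, _+1 =>
      exact eq_of_eq_below hg₁ hg₂ (fun w x y z hlt => ih _ hlt w x y z rfl) hs
        (by omega) hn

end IsFibonacciGate

theorem stmt_17 (a b c d e f h i j p : ℂ)
    (n : ℕ) (g1 g2 : ℕ → ℕ → ℕ → ℕ → ℂ)
    (hg1 : ∀ w x y z : ℕ, w + x + y + z + 2 = n →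
      (g1 w (x+2) y z = g1 (w+2) x y z + a * g1 (w+1) (x+1) y z + b * g1 (w+1) x (y+1) z + c * g1 (w+1) x y (z+1)) ∧
      (g1 w x (y+2) z = g1 (w+2) x y z + d * g1 (w+1) (x+1) y z + e * g1 (w+1) x (y+1) z + f * g1 (w+1) x y (z+1)) ∧
      (g1 w x y (z+2) = g1 (w+2) x y z + h * g1 (w+1) (x+1) y z + i * g1 (w+1) x (y+1) z + j * g1 (w+1) x y (z+1)) ∧
      (g1 w (x+1) (y+1) z = b * g1 (w+1) (x+1) y z + d * g1 (w+1) x (y+1) z + p * g1 (w+1) x y (z+1)) ∧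
      (g1 w (x+1) y (z+1) = c * g1 (w+1) (x+1) y z + p * g1 (w+1) x (y+1) z + h * g1 (w+1) x y (z+1)) ∧
      (g1 w x (y+1) (z+1) = p * g1 (w+1) (x+1) y z + f * g1 (w+1) x (y+1) z + i * g1 (w+1) x y (z+1)))
    (hg2 : ∀ w x y z : ℕ, w + x + y + z + 2 = n →
      (g2 w (x+2) y z = g2 (w+2) x y z + a * g2 (w+1) (x+1) y z + b * g2 (w+1) x (y+1) z + c * g2 (w+1) x y (z+1)) ∧
      (g2 w x (y+2) z = g2 (w+2) x y z + d * g2 (w+1) (x+1) y z + e * g2 (w+1) x (y+1) z + f * g2 (w+1) x y (z+1)) ∧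
      (g2 w x y (z+2) = g2 (w+2) x y z + h * g2 (w+1) (x+1) y z + i * g2 (w+1) x (y+1) z + j * g2 (w+1) x y (z+1)) ∧
      (g2 w (x+1) (y+1) z = b * g2 (w+1) (x+1) y z + d * g2 (w+1) x (y+1) z + p * g2 (w+1) x y (z+1)) ∧
      (g2 w (x+1) y (z+1) = c * g2 (w+1) (x+1) y z + p * g2 (w+1) x (y+1) z + h * g2 (w+1) x y (z+1)) ∧
      (g2 w x (y+1) (z+1) = p * g2 (w+1) (x+1) y z + f * g2 (w+1) x (y+1) z + i * g2 (w+1) x y (z+1)))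
    (htop0 : g1 n 0 0 0 = g2 n 0 0 0)
    (htop1 : g1 (n-1) 1 0 0 = g2 (n-1) 1 0 0)
    (htop2 : g1 (n-1) 0 1 0 = g2 (n-1) 0 1 0)
    (htop3 : g1 (n-1) 0 0 1 = g2 (n-1) 0 0 1) :
    ∀ w x y z : ℕ, w + x + y + z = n → g1 w x y z = g2 w x y z :=
  IsFibonacciGate.eq_of_eq_top hg1 hg2 htop0 htop1 htop2 htop3
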